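/- Let $K$ be a field of characteristic different from 2, $S = K[x,y,z]$, and $I = (x^2, y^2, z^2)$. Then $l = x + y + z$ is a weak Lefschetz element on $S/I$: multiplication by $l$ from $(S/I)_j$ to $(S/I)_{j+1}$ has maximal rank for every $j \ge 0$. -/

import Mathlib

open MvPolynomial

variable {K : Type*} [Field K] {n : ℕ}

/-- The total degree of an exponent vector. -/
def mdeg {n : ℕ} (m : Fin n →₀ ℕ) : ℕ := m.sum fun _ e => e

/-- `I` is a monomial ideal: it contains every monomial of each of its elements. -/
def IsMonomialIdeal (I : Ideal (MvPolynomial (Fin n) K)) : Prop :=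
  ∀ f ∈ I, ∀ m ∈ f.support, (monomial m (1 : K)) ∈ I

/-- `I` is stable: for every monomial `u ∈ I` with largest dividing variable `x_k`,
and every `i ≤ k`, the monomial `(x_i / x_k) * u` lies in `I`. -/
def IsStableIdeal (I : Ideal (MvPolynomial (Fin n) K)) : Prop :=
  ∀ m : Fin n →₀ ℕ, (monomial m (1 : K)) ∈ I →
    ∀ k i : Fin n, m k ≠ 0 → (∀ k', k < k' → m k' = 0) → i ≤ k →
      (monomial (m + Finsupp.single i 1 - Finsupp.single k 1) (1 : K)) ∈ I

/-- `I` is strongly stable: for every monomial `u ∈ I`, every variable `x_k` dividing `u`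
and every `i ≤ k`, the monomial `(x_i / x_k) * u` lies in `I`. -/
def IsStronglyStableIdeal (I : Ideal (MvPolynomial (Fin n) K)) : Prop :=
  ∀ m : Fin n →₀ ℕ, (monomial m (1 : K)) ∈ I →
    ∀ k i : Fin n, m k ≠ 0 → i ≤ k →
      (monomial (m + Finsupp.single i 1 - Finsupp.single k 1) (1 : K)) ∈ I

/-- `v <_lex u` for exponent vectors, lex order with `x_1 > x_2 > ⋯ > x_n`. -/
def lexLt {n : ℕ} (v u : Fin n →₀ ℕ) : Prop :=
  ∃ i : Fin n, (∀ j < i, v j = u j) ∧ v i < u i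

/-- `I` is a lexsegment ideal. -/
def IsLexsegmentIdeal (I : Ideal (MvPolynomial (Fin n) K)) : Prop :=
  IsMonomialIdeal I ∧
    ∀ u v : Fin n →₀ ℕ, (monomial u (1 : K)) ∈ I → mdeg v = mdeg u → lexLt u v →
      (monomial v (1 : K)) ∈ I

/-- The degree `j` piece of `S/I`, as the image of the degree `j` homogeneous polynomials. -/
noncomputable def Qpiece (I : Ideal (MvPolynomial (Fin n) K)) (j : ℕ) :
    Submodule K (MvPolynomial (Fin n) K ⧸ I) :=
  (homogeneousSubmodule (Fin n) K j).map (Ideal.Quotient.mkₐ K I).toLinearMap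

/-- Multiplication by `g` maps `(S/I)_j` injectively (to `(S/I)_{j'}`). -/
def QInj (I : Ideal (MvPolynomial (Fin n) K)) (g : MvPolynomial (Fin n) K)
    (j _j' : ℕ) : Prop :=
  ∀ f₁ ∈ Qpiece I j, ∀ f₂ ∈ Qpiece I j,
    Ideal.Quotient.mk I g * f₁ = Ideal.Quotient.mk I g * f₂ → f₁ = f₂

/-- Multiplication by `g` maps `(S/I)_j` onto `(S/I)_{j'}`. -/
def QSurj (I : Ideal (MvPolynomial (Fin n) K)) (g : MvPolynomial (Fin n) K)
    (j j' : ℕ) : Prop :=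
  ∀ h ∈ Qpiece I j', ∃ f ∈ Qpiece I j, Ideal.Quotient.mk I g * f = h

/-- Multiplication by `g` from `(S/I)_j` to `(S/I)_{j'}` has maximal rank. -/
def MulMaxRank (I : Ideal (MvPolynomial (Fin n) K)) (g : MvPolynomial (Fin n) K)
    (j j' : ℕ) : Prop :=
  QInj I g j j' ∨ QSurj I g j j'

/-! A polynomial lies in `I = (x², y², z²)` iff it has no squarefree monomial in its support, and
the coefficient of a squarefree monomial `x^a` in `l * p` is the sum of the coefficients of `p` at
the monomials `x^a / x_i` with `a_i = 1`. In degree 0 this gives injectivity at once. In degree 1,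
the coefficients `c_i` of `p` at the variables satisfy `c_i + c_k = 0` for all `i ≠ k`, hence
`2 c_i = 0`. In degree 3, `S/I` is spanned by `xyz ≡ l * xy`, and it vanishes in degrees `≥ 4`. -/

open Finsupp

section GradedPieces

variable {I : Ideal (MvPolynomial (Fin n) K)} {g : MvPolynomial (Fin n) K} {j j' : ℕ}

theorem mem_Qpiece_iff {f : MvPolynomial (Fin n) K ⧸ I} :
    f ∈ Qpiece I j ↔
      ∃ p : MvPolynomial (Fin n) K, p.IsHomogeneous j ∧ Ideal.Quotient.mk I p = f := by
  simp [Qpiece, mem_homogeneousSubmodule, Ideal.Quotient.mkₐ_eq_mk]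

theorem QInj.of_mul_mem
    (h : ∀ p : MvPolynomial (Fin n) K, p.IsHomogeneous j → g * p ∈ I → p ∈ I) :
    QInj I g j j' := by
  intro f₁ hf₁ f₂ hf₂ hf
  obtain ⟨p, hp, rfl⟩ := mem_Qpiece_iff.mp hf₁
  obtain ⟨q, hq, rfl⟩ := mem_Qpiece_iff.mp hf₂
  rw [← map_mul, ← map_mul, Ideal.Quotient.eq, ← mul_sub] at hf
  exact Ideal.Quotient.eq.mpr (h _ (hp.sub hq) hf)

theorem QSurj.of_mul_sub_mem
    (h : ∀ p : MvPolynomial (Fin n) K, p.IsHomogeneous j' →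
      ∃ q : MvPolynomial (Fin n) K, q.IsHomogeneous j ∧ g * q - p ∈ I) :
    QSurj I g j j' := by
  intro f hf
  obtain ⟨p, hp, rfl⟩ := mem_Qpiece_iff.mp hf
  obtain ⟨q, hq, hqp⟩ := h p hp
  exact ⟨_, mem_Qpiece_iff.mpr ⟨q, hq, rfl⟩, by rw [← map_mul, Ideal.Quotient.eq]; exact hqp⟩

end GradedPieces

section SquarefreeExponents

variable {σ : Type*} [Fintype σ] {m : σ →₀ ℕ}

theorem degree_le_card_of_forall_le_one (hm : ∀ i, m i ≤ 1) : m.degree ≤ Fintype.card σ := by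
  rw [degree_eq_sum]
  simpa using Finset.sum_le_sum fun i (_ : i ∈ Finset.univ) => hm i

theorem eq_one_of_forall_le_one_of_degree_eq_card (hm : ∀ i, m i ≤ 1)
    (hdeg : m.degree = Fintype.card σ) (i : σ) : m i = 1 := by
  replace hdeg : ∑ i, m i = ∑ _i : σ, 1 := by simpa [degree_eq_sum] using hdeg
  exact (Finset.sum_eq_sum_iff_of_le fun i _ => hm i).mp hdeg i (Finset.mem_univ i)

end SquarefreeExponents

theorem single_one_apply_le_one {σ : Type*} (i k : σ) : single i 1 k ≤ 1 := by
  classical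
  rw [single_apply]
  split_ifs <;> simp

section SquaresIdeal

variable {σ : Type*}

variable (K σ) in
noncomputable def squaresIdeal : Ideal (MvPolynomial σ K) :=
  Ideal.span (Set.range fun i => X i ^ 2)

theorem X_sq_mem_squaresIdeal (i : σ) : (X i : MvPolynomial σ K) ^ 2 ∈ squaresIdeal K σ :=
  Ideal.subset_span ⟨i, rfl⟩

theorem mem_squaresIdeal_iff {p : MvPolynomial σ K} :
    p ∈ squaresIdeal K σ ↔ ∀ m : σ →₀ ℕ, (∀ i, m i ≤ 1) → coeff m p = 0 := by
  have hgen : Set.range (fun i : σ => (X i ^ 2 : MvPolynomial σ K)) =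
      (fun s => monomial s 1) '' Set.range fun i => single i 2 := by
    rw [← Set.range_comp]
    simp [Function.comp_def, X_pow_eq_monomial]
  rw [squaresIdeal, hgen, mem_ideal_span_monomial_image]
  simp only [Set.mem_range, exists_exists_eq_and, single_le_iff, MvPolynomial.mem_support_iff]
  refine forall_congr' fun m => ?_
  rw [not_imp_comm]
  simp only [not_exists, not_le, Nat.lt_succ_iff]

theorem squaresIdeal_fin_three :
    squaresIdeal K (Fin 3) = Ideal.span {(X 0 : MvPolynomial (Fin 3) K) ^ 2, X 1 ^ 2, X 2 ^ 2} := by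
  rw [squaresIdeal]
  congr 1
  ext f
  simp [Fin.exists_fin_succ, eq_comm]

variable [Fintype σ] [DecidableEq σ]

theorem coeff_sum_X_mul (m : σ →₀ ℕ) (p : MvPolynomial σ K) :
    coeff m ((∑ i, X i) * p) = ∑ i ∈ m.support, coeff (m - single i 1) p := by
  simp only [Finset.sum_mul, coeff_sum, coeff_X_mul']
  rw [Finset.sum_ite_mem, Finset.univ_inter]

theorem coeff_single_add_single_sum_X_mul {i k : σ} (hik : i ≠ k) (p : MvPolynomial σ K) :
    coeff (single i 1 + single k 1) ((∑ i, X i) * p) =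
      coeff (single k 1) p + coeff (single i 1) p := by
  rw [coeff_sum_X_mul, support_add_eq, support_single _ one_ne_zero,
    support_single _ one_ne_zero, Finset.sum_union, Finset.sum_singleton,
    Finset.sum_singleton, add_tsub_cancel_left, add_tsub_cancel_right]
  all_goals simpa [support_single] using hik

end SquaresIdeal

theorem qSurj_squaresIdeal_of_lt {g : MvPolynomial (Fin n) K} {j j' : ℕ} (hj' : n < j') :
    QSurj (squaresIdeal K (Fin n)) g j j' :=
  QSurj.of_mul_sub_mem fun p hp => ⟨0, isHomogeneous_zero _ _ _, by
    simpa using neg_mem (mem_squaresIdeal_iff.mpr fun m hm => hp.coeff_eq_zero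
      (((degree_le_card_of_forall_le_one hm).trans_eq (Fintype.card_fin n)).trans_lt hj').ne)⟩

theorem qInj_squaresIdeal_zero_one [NeZero n] :
    QInj (squaresIdeal K (Fin n)) (∑ i, X i) 0 1 := by
  refine QInj.of_mul_mem fun p hp h => ?_
  rw [mem_squaresIdeal_iff] at h ⊢
  intro m _
  by_cases hm : m.degree = 0
  · have h0 := h (single 0 1) (single_one_apply_le_one 0)
    rw [coeff_sum_X_mul, support_single _ one_ne_zero, Finset.sum_singleton, tsub_self] at h0
    rwa [(degree_eq_zero_iff m).mp hm]
  · exact hp.coeff_eq_zero hm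

theorem qInj_squaresIdeal_fin_three_one_two (h2 : (2 : K) ≠ 0) :
    QInj (squaresIdeal K (Fin 3)) (∑ i, X i) 1 2 := by
  refine QInj.of_mul_mem fun p hp h => ?_
  rw [mem_squaresIdeal_iff] at h ⊢
  have hpair (i k : Fin 3) (hik : i ≠ k) : coeff (single k 1) p + coeff (single i 1) p = 0 := by
    rw [← coeff_single_add_single_sum_X_mul hik]
    refine h _ fun l => ?_
    simp only [Finsupp.coe_add, Pi.add_apply, single_apply]
    split_ifs <;> simp_all
  have hvar (i : Fin 3) : coeff (single i 1) p = 0 := by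
    obtain ⟨j, k, hij, hik, hjk⟩ : ∃ j k : Fin 3, i ≠ j ∧ i ≠ k ∧ j ≠ k := by
      fin_cases i <;> decide
    have : (2 : K) * coeff (single i 1) p = 0 := by
      linear_combination hpair i j hij + hpair i k hik - hpair j k hjk
    exact (mul_eq_zero.mp this).resolve_left h2
  intro m _
  by_cases hm : m.degree = 1
  · obtain ⟨i, rfl⟩ := (Finsupp.sum_eq_one_iff m).mp hm
    exact hvar i
  · exact hp.coeff_eq_zero hm

theorem qSurj_squaresIdeal_fin_three_two_three :
    QSurj (squaresIdeal K (Fin 3)) (∑ i, X i) 2 3 := by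
  refine QSurj.of_mul_sub_mem fun p hp => ?_
  set c := coeff (single 0 1 + single 1 1 + single 2 1) p
  have hq : (C c * X 0 * X 1 : MvPolynomial (Fin 3) K).IsHomogeneous 2 :=
    (isHomogeneous_C_mul_X c 0).mul (isHomogeneous_X K 1)
  refine ⟨C c * X 0 * X 1, hq, ?_⟩
  have hlq : (∑ i, X i) * (C c * X 0 * X 1) - C c * X 0 * X 1 * X 2 ∈ squaresIdeal K (Fin 3) := by
    rw [show (∑ i, X i : MvPolynomial (Fin 3) K) * (C c * X 0 * X 1) - C c * X 0 * X 1 * X 2 =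
        C c * X 1 * X 0 ^ 2 + C c * X 0 * X 1 ^ 2 by simp only [Fin.sum_univ_three]; ring]
    exact add_mem (Ideal.mul_mem_left _ _ (X_sq_mem_squaresIdeal 0))
      (Ideal.mul_mem_left _ _ (X_sq_mem_squaresIdeal 1))
  have hxyz : C c * X 0 * X 1 * X 2 - p ∈ squaresIdeal K (Fin 3) := by
    refine mem_squaresIdeal_iff.mpr fun m hm => ?_
    by_cases hdeg : m.degree = 3
    · have hm1 := eq_one_of_forall_le_one_of_degree_eq_card hm (by simpa using hdeg)
      obtain rfl : m = single 0 1 + single 1 1 + single 2 1 := by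
        ext i
        fin_cases i <;> simp [hm1]
      simp [c, X]
    · rw [coeff_sub, hp.coeff_eq_zero hdeg, sub_zero]
      exact (hq.mul (isHomogeneous_X K 2)).coeff_eq_zero hdeg
  simpa using add_mem hlq hxyz

theorem stmt_5 (h2 : (2 : K) ≠ 0)
    (I : Ideal (MvPolynomial (Fin 3) K))
    (hI : I = Ideal.span {(X 0 : MvPolynomial (Fin 3) K) ^ 2, X 1 ^ 2, X 2 ^ 2}) :
    ∀ j : ℕ, MulMaxRank I (X 0 + X 1 + X 2) j (j + 1) := by
  rw [hI, ← squaresIdeal_fin_three, ← Fin.sum_univ_three X]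
  rintro (_ | _ | _ | j)
  · exact Or.inl qInj_squaresIdeal_zero_one
  · exact Or.inl (qInj_squaresIdeal_fin_three_one_two h2)
  · exact Or.inr qSurj_squaresIdeal_fin_three_two_three
  · exact Or.inr (qSurj_squaresIdeal_of_lt (by omega))
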